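/- Let Ψ ↦ A₂(Ψ) be defined pointwise on ℂ^N by A₂(Ψ)(δΨ) = α_n f(|Ψ|²)·2Re⟨Ψ, δΨ⟩·Ψ, where f(ρ) = (1/n)ρ^{1/n−1} for ρ ≤ R, f(ρ) = p'(ρ) for R < ρ < 2R, and f(ρ) = 0 for ρ ≥ 2R. Then each component map Ψ ↦ f(|Ψ|²)ψ_j ψ_m is Hölder continuous on ℂ^N with exponent α = 2/n: |f(|Ψ|²)ψ_jψ_m − f(|Φ|²)φ_jφ_m| ≤ c|Ψ − Φ|^{2/n} for all Ψ, Φ ∈ ℂ^N. -/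

import Mathlib

noncomputable def transP (n : ℕ) (R : ℝ) (ρ : ℝ) : ℝ :=
  ((n + 1) * R ^ ((1 : ℝ) / n - 4) / (4 * n ^ 2)) * ρ ^ 4
    - ((4 * n + 5) * R ^ ((1 : ℝ) / n - 3) / (3 * n ^ 2)) * ρ ^ 3
    + (2 * (n + 2) * R ^ ((1 : ℝ) / n - 2) / n ^ 2) * ρ ^ 2
    - (4 * R ^ ((1 : ℝ) / n - 1) / n ^ 2) * ρ
    + ((12 * n ^ 2 - 11 * n + 17) * R ^ ((1 : ℝ) / n) / (12 * n ^ 2))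

/-- The factor `f` appearing in `A₂`: `f(ρ) = (1/n)ρ^{1/n−1}` for `ρ ≤ R`,
`f(ρ) = p'(ρ)` for `R < ρ < 2R`, and `f(ρ) = 0` for `ρ ≥ 2R`. -/
noncomputable def A2factor (n : ℕ) (R : ℝ) (ρ : ℝ) : ℝ :=
  if ρ ≤ R then (1 / n) * ρ ^ ((1 : ℝ) / n - 1)
  else if ρ < 2 * R then deriv (transP n R) ρ
  else 0

/-! Write `β = 1/n`. The factor `f = A2factor n R` satisfies `|f ρ| ≲ ρ^(β-1)` and, being `C¹`
on `(0, ∞)` with `|f' ρ| ≲ ρ^(β-2)` (on `[R, 2R]` it is `p'`, which matches value and slope of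
the neighbouring pieces at `R` and `2R`), also `|f ρ - f σ| ≲ σ^(β-2) (ρ - σ)` for `0 < σ ≤ ρ`.
Hence `g Ψ = f(‖Ψ‖²) ψ_j ψ_m` obeys `‖g Ψ‖ ≲ ‖Ψ‖^(2β)` and, when `‖Φ‖ ≤ ‖Ψ‖ ≤ 2‖Φ‖`,
`‖g Ψ - g Φ‖ ≲ ‖Φ‖^(2β-1) ‖Ψ - Φ‖`. With `h = ‖Ψ - Φ‖`: if `‖Φ‖ ≤ h` both values are
`≲ h^(2β)`; otherwise `‖Φ‖^(2β-1) h ≤ h^(2β)`. -/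

open Set Filter Topology

lemma rpow_sub_one_mul_le_rpow {r h α : ℝ} (hh : 0 ≤ h) (hhr : h ≤ r) (hα : α ≤ 1) :
    r ^ (α - 1) * h ≤ h ^ α := by
  rcases hh.eq_or_lt with rfl | hh
  · rw [mul_zero]
    positivity
  calc r ^ (α - 1) * h ≤ h ^ (α - 1) * h :=
        mul_le_mul_of_nonneg_right (Real.rpow_le_rpow_of_nonpos hh hhr (by linarith)) hh.le
    _ = h ^ α := by rw [← Real.rpow_add_one hh.ne', sub_add_cancel]

lemma sq_rpow_mul_pow {t γ δ : ℝ} (ht : 0 < t) (k : ℕ) (h : δ = 2 * γ + k) :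
    (t ^ 2) ^ γ * t ^ k = t ^ δ := by
  rw [h, Real.rpow_add_natCast ht.ne', ← Real.rpow_natCast_mul ht.le, Nat.cast_ofNat]

lemma norm_sub_le_mul_rpow_of_norm_le_of_norm_sub_le {E F : Type*} [SeminormedAddCommGroup E]
    [SeminormedAddCommGroup F] {g : E → F} {α C : ℝ} (hα₀ : 0 ≤ α) (hα : α ≤ 1) (hC : 0 ≤ C)
    (hg : ∀ x, ‖g x‖ ≤ C * ‖x‖ ^ α)
    (hlip : ∀ x y, 0 < ‖y‖ → ‖y‖ ≤ ‖x‖ → ‖x‖ ≤ 2 * ‖y‖ →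
      ‖g x - g y‖ ≤ C * ‖y‖ ^ (α - 1) * ‖x - y‖) (x y : E) :
    ‖g x - g y‖ ≤ 3 * C * ‖x - y‖ ^ α := by
  wlog hyx : ‖y‖ ≤ ‖x‖ generalizing x y
  · rw [norm_sub_rev, norm_sub_rev x]
    exact this y x (le_of_not_ge hyx)
  have hx : ‖x‖ ≤ ‖y‖ + ‖x - y‖ := by linarith [norm_sub_norm_le x y]
  have hpow : 0 ≤ C * ‖x - y‖ ^ α := by positivity
  rcases le_or_gt ‖y‖ ‖x - y‖ with hfar | hnear
  · have h2 : (2 * ‖x - y‖) ^ α ≤ 2 * ‖x - y‖ ^ α := by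
      rw [Real.mul_rpow zero_le_two (norm_nonneg _)]
      gcongr
      simpa using Real.rpow_le_rpow_of_exponent_le one_le_two hα
    calc ‖g x - g y‖ ≤ ‖g x‖ + ‖g y‖ := norm_sub_le _ _
      _ ≤ C * (2 * ‖x - y‖) ^ α + C * ‖x - y‖ ^ α := by
          gcongr
          · exact (hg x).trans (by gcongr; linarith)
          · exact (hg y).trans (by gcongr)
      _ ≤ 3 * C * ‖x - y‖ ^ α := by nlinarith
  · calc ‖g x - g y‖ ≤ C * (‖y‖ ^ (α - 1) * ‖x - y‖) := by
          rw [← mul_assoc]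
          exact hlip x y ((norm_nonneg _).trans_lt hnear) hyx (by linarith)
      _ ≤ C * ‖x - y‖ ^ α := by
          gcongr
          exact rpow_sub_one_mul_le_rpow (norm_nonneg _) hnear.le hα
      _ ≤ 3 * C * ‖x - y‖ ^ α := by linarith

lemma hasDerivAt_of_hasDerivWithinAt_Iic_Ici {F : Type*} [NormedAddCommGroup F] [NormedSpace ℝ F]
    {f : ℝ → F} {f' : F} {x : ℝ}
    (h₁ : HasDerivWithinAt f f' (Iic x) x) (h₂ : HasDerivWithinAt f f' (Ici x) x) :
    HasDerivAt f f' x := by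
  simpa [Iic_union_Ici] using h₁.union h₂

lemma abs_sub_le_mul_rpow_of_hasDerivAt {f f' : ℝ → ℝ} {C γ : ℝ} (hC : 0 ≤ C) (hγ : γ ≤ 0)
    (hf : ∀ x, 0 < x → HasDerivAt f (f' x) x) (hf' : ∀ x, 0 < x → |f' x| ≤ C * x ^ γ)
    {σ ρ : ℝ} (hσ : 0 < σ) (hσρ : σ ≤ ρ) :
    |f ρ - f σ| ≤ C * σ ^ γ * (ρ - σ) := by
  have hpos : ∀ x ∈ Icc σ ρ, 0 < x := fun x hx ↦ hσ.trans_le hx.1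
  have := Convex.norm_image_sub_le_of_norm_hasDerivWithin_le
    (fun x hx ↦ (hf x (hpos x hx)).hasDerivWithinAt)
    (fun x hx ↦ (hf' x (hpos x hx)).trans
      (mul_le_mul_of_nonneg_left (Real.rpow_le_rpow_of_nonpos hσ hx.1 hγ) hC))
    (convex_Icc σ ρ) (left_mem_Icc.2 hσρ) (right_mem_Icc.2 hσρ)
  rwa [Real.norm_eq_abs, Real.norm_eq_abs, abs_of_nonneg (sub_nonneg.2 hσρ)] at this

-- Both `A2factor n R` and its derivative on `(0, ∞)` have this shape.
noncomputable def powerCutoff (c γ R : ℝ) (q : ℝ → ℝ) (ρ : ℝ) : ℝ :=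
  if ρ ≤ R then c * ρ ^ γ else if ρ < 2 * R then q ρ else 0

section powerCutoff

variable {c γ R : ℝ} {q q' : ℝ → ℝ}

lemma powerCutoff_of_le {ρ : ℝ} (h : ρ ≤ R) : powerCutoff c γ R q ρ = c * ρ ^ γ := if_pos h

lemma powerCutoff_of_two_mul_le (hR : 0 < R) {ρ : ℝ} (h : 2 * R ≤ ρ) :
    powerCutoff c γ R q ρ = 0 := by
  rw [powerCutoff, if_neg (by linarith), if_neg h.not_gt]

lemma powerCutoff_of_mem_Icc (hqR : q R = c * R ^ γ) (hq2R : q (2 * R) = 0) {ρ : ℝ}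
    (h : ρ ∈ Icc R (2 * R)) : powerCutoff c γ R q ρ = q ρ := by
  obtain ⟨h₁, h₂⟩ := h
  rcases h₁.eq_or_lt with rfl | h₁
  · rw [powerCutoff_of_le le_rfl, hqR]
  rcases h₂.eq_or_lt with rfl | h₂
  · rw [powerCutoff_of_two_mul_le (by linarith) le_rfl, hq2R]
  · rw [powerCutoff, if_neg h₁.not_ge, if_pos h₂]

lemma hasDerivAt_powerCutoff (hR : 0 < R) (hq : ∀ x, HasDerivAt q (q' x) x)
    (hqR : q R = c * R ^ γ) (hq'R : q' R = c * γ * R ^ (γ - 1))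
    (hq2R : q (2 * R) = 0) (hq'2R : q' (2 * R) = 0) {ρ : ℝ} (hρ : 0 < ρ) :
    HasDerivAt (powerCutoff c γ R q) (powerCutoff (c * γ) (γ - 1) R q' ρ) ρ := by
  have hpow : ∀ x, 0 < x → HasDerivAt (fun x ↦ c * x ^ γ) (c * γ * x ^ (γ - 1)) x := fun x hx ↦ by
    simpa [mul_assoc] using (Real.hasDerivAt_rpow_const (p := γ) (Or.inl hx.ne')).const_mul c
  have eq_pow : EqOn (powerCutoff c γ R q) (fun x ↦ c * x ^ γ) (Iic R) :=
    fun x hx ↦ powerCutoff_of_le hx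
  have eq_q : EqOn (powerCutoff c γ R q) q (Icc R (2 * R)) :=
    fun x hx ↦ powerCutoff_of_mem_Icc hqR hq2R hx
  have eq_zero : EqOn (powerCutoff c γ R q) 0 (Ici (2 * R)) :=
    fun x hx ↦ powerCutoff_of_two_mul_le hR hx
  rcases lt_trichotomy ρ R with hρR | rfl | hρR
  · rw [powerCutoff_of_le hρR.le]
    exact (hpow ρ hρ).congr_of_eventuallyEq (eventuallyEq_of_mem (Iic_mem_nhds hρR) eq_pow)
  · rw [powerCutoff_of_le le_rfl]
    refine hasDerivAt_of_hasDerivWithinAt_Iic_Ici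
      ((hpow ρ hρ).hasDerivWithinAt.congr_of_mem eq_pow self_mem_Iic) ?_
    rw [← hq'R]
    exact (hq ρ).hasDerivWithinAt.congr_of_eventuallyEq_of_mem
      (eventuallyEq_of_mem (Icc_mem_nhdsGE (by linarith)) eq_q) self_mem_Ici
  rcases lt_trichotomy ρ (2 * R) with hρ2R | rfl | hρ2R
  · rw [powerCutoff, if_neg hρR.not_ge, if_pos hρ2R]
    exact (hq ρ).congr_of_eventuallyEq
      (eventuallyEq_of_mem (Icc_mem_nhds hρR hρ2R) eq_q)
  · rw [powerCutoff_of_two_mul_le hR le_rfl]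
    refine hasDerivAt_of_hasDerivWithinAt_Iic_Ici ?_
      ((hasDerivAt_const _ 0).hasDerivWithinAt.congr_of_mem eq_zero self_mem_Ici)
    rw [← hq'2R]
    exact (hq _).hasDerivWithinAt.congr_of_eventuallyEq_of_mem
      (eventuallyEq_of_mem (Icc_mem_nhdsLE (by linarith)) eq_q) self_mem_Iic
  · rw [powerCutoff_of_two_mul_le hR hρ2R.le]
    exact (hasDerivAt_const ρ 0).congr_of_eventuallyEq
      (eventuallyEq_of_mem (Ici_mem_nhds hρ2R) eq_zero)

lemma exists_abs_powerCutoff_le (hγ : γ ≤ 0) (hR : 0 < R) (hq : ContinuousOn q (Icc R (2 * R))) :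
    ∃ C, 0 ≤ C ∧ ∀ ρ, 0 < ρ → |powerCutoff c γ R q ρ| ≤ C * ρ ^ γ := by
  obtain ⟨K, hK⟩ := isCompact_Icc.exists_bound_of_continuousOn hq
  have hK0 : 0 ≤ K := (norm_nonneg _).trans (hK R ⟨le_rfl, by linarith⟩)
  refine ⟨|c| + K * (2 * R) ^ (-γ), by positivity, fun ρ hρ ↦ ?_⟩
  have hργ : 0 ≤ ρ ^ γ := Real.rpow_nonneg hρ.le γ
  unfold powerCutoff
  split_ifs with h₁ h₂
  · rw [abs_mul, abs_of_nonneg hργ]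
    gcongr
    exact le_add_of_nonneg_right (by positivity)
  · have h_one : 1 ≤ (2 * R) ^ (-γ) * ρ ^ γ := by
      rw [Real.rpow_neg (by linarith), ← div_eq_inv_mul, one_le_div (by positivity)]
      exact Real.rpow_le_rpow_of_nonpos hρ h₂.le hγ
    calc |q ρ| ≤ K := hK ρ ⟨(not_le.1 h₁).le, h₂.le⟩
      _ ≤ K * ((2 * R) ^ (-γ) * ρ ^ γ) := le_mul_of_one_le_right hK0 h_one
      _ ≤ (|c| + K * (2 * R) ^ (-γ)) * ρ ^ γ := by nlinarith [abs_nonneg c]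
  · rw [abs_zero]
    positivity

end powerCutoff

noncomputable def componentMap {𝕜 ι : Type*} [RCLike 𝕜] [Fintype ι] (f : ℝ → ℝ) (j m : ι)
    (x : EuclideanSpace 𝕜 ι) : 𝕜 :=
  f (‖x‖ ^ 2) * x j * x m

section componentMap

variable {𝕜 ι : Type*} [RCLike 𝕜] [Fintype ι] {f : ℝ → ℝ} {β C₁ C₂ : ℝ}

lemma norm_componentMap_le (hC₁ : 0 ≤ C₁) (hf : ∀ ρ, 0 < ρ → |f ρ| ≤ C₁ * ρ ^ (β - 1))
    (j m : ι) (x : EuclideanSpace 𝕜 ι) :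
    ‖componentMap f j m x‖ ≤ C₁ * ‖x‖ ^ (2 * β) := by
  rcases (norm_nonneg x).eq_or_lt with hx | hx
  · rw [norm_eq_zero.1 hx.symm]
    simp only [componentMap, PiLp.zero_apply, mul_zero, norm_zero]
    positivity
  calc ‖componentMap f j m x‖ = |f (‖x‖ ^ 2)| * ‖x j‖ * ‖x m‖ := by
        rw [componentMap, norm_mul, norm_mul, RCLike.norm_ofReal]
    _ ≤ C₁ * (‖x‖ ^ 2) ^ (β - 1) * ‖x‖ * ‖x‖ := by
        gcongr
        · exact hf _ (by positivity)
        · exact PiLp.norm_apply_le x j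
        · exact PiLp.norm_apply_le x m
    _ = C₁ * ((‖x‖ ^ 2) ^ (β - 1) * ‖x‖ ^ 2) := by ring
    _ = C₁ * ‖x‖ ^ (2 * β) := by rw [sq_rpow_mul_pow hx 2 (δ := 2 * β) (by push_cast; ring)]

lemma norm_componentMap_sub_le (hβ : 2 * β ≤ 1) (hC₁ : 0 ≤ C₁) (hC₂ : 0 ≤ C₂)
    (hf₁ : ∀ ρ, 0 < ρ → |f ρ| ≤ C₁ * ρ ^ (β - 1))
    (hf₂ : ∀ σ ρ, 0 < σ → σ ≤ ρ → |f ρ - f σ| ≤ C₂ * σ ^ (β - 2) * (ρ - σ))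
    (j m : ι) {x y : EuclideanSpace 𝕜 ι} (hy : 0 < ‖y‖) (hyx : ‖y‖ ≤ ‖x‖)
    (hx : ‖x‖ ≤ 2 * ‖y‖) :
    ‖componentMap f j m x - componentMap f j m y‖ ≤
      (2 * C₁ + 3 * C₂) * ‖y‖ ^ (2 * β - 1) * ‖x - y‖ := by
  have ht : 0 < ‖x‖ := hy.trans_le hyx
  have hts : ‖x‖ - ‖y‖ ≤ ‖x - y‖ := norm_sub_norm_le x y
  have hcoord : ∀ i, ‖x i - y i‖ ≤ ‖x - y‖ := fun i ↦ by
    simpa using PiLp.norm_apply_le (x - y) i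
  have hprod : ‖x j * x m - y j * y m‖ ≤ 2 * ‖x‖ * ‖x - y‖ :=
    calc ‖x j * x m - y j * y m‖ = ‖x j * (x m - y m) + (x j - y j) * y m‖ := by ring_nf
      _ ≤ ‖x j‖ * ‖x m - y m‖ + ‖x j - y j‖ * ‖y m‖ := by
          rw [← norm_mul, ← norm_mul]
          exact norm_add_le _ _
      _ ≤ ‖x‖ * ‖x - y‖ + ‖x - y‖ * ‖y‖ := by
          gcongr
          exacts [PiLp.norm_apply_le x j, hcoord m, hcoord j, PiLp.norm_apply_le y m]
      _ ≤ 2 * ‖x‖ * ‖x - y‖ := by nlinarith [norm_nonneg (x - y)]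
  have hmain : ‖(f (‖x‖ ^ 2) : 𝕜) * (x j * x m - y j * y m)‖ ≤
      2 * C₁ * ‖y‖ ^ (2 * β - 1) * ‖x - y‖ :=
    calc _ = |f (‖x‖ ^ 2)| * ‖x j * x m - y j * y m‖ := by rw [norm_mul, RCLike.norm_ofReal]
      _ ≤ C₁ * (‖x‖ ^ 2) ^ (β - 1) * (2 * ‖x‖ * ‖x - y‖) := by
          gcongr
          exact hf₁ _ (by positivity)
      _ = 2 * C₁ * ((‖x‖ ^ 2) ^ (β - 1) * ‖x‖ ^ 1) * ‖x - y‖ := by ring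
      _ = 2 * C₁ * ‖x‖ ^ (2 * β - 1) * ‖x - y‖ := by
          rw [sq_rpow_mul_pow ht 1 (δ := 2 * β - 1) (by push_cast; ring)]
      _ ≤ 2 * C₁ * ‖y‖ ^ (2 * β - 1) * ‖x - y‖ := by
          have := Real.rpow_le_rpow_of_nonpos hy hyx (by linarith : 2 * β - 1 ≤ 0)
          gcongr
  have hweight : ‖((f (‖x‖ ^ 2) - f (‖y‖ ^ 2) : ℝ) : 𝕜) * (y j * y m)‖ ≤
      3 * C₂ * ‖y‖ ^ (2 * β - 1) * ‖x - y‖ :=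
    calc _ = |f (‖x‖ ^ 2) - f (‖y‖ ^ 2)| * (‖y j‖ * ‖y m‖) := by
          rw [norm_mul, norm_mul, RCLike.norm_ofReal]
      _ ≤ C₂ * (‖y‖ ^ 2) ^ (β - 2) * (3 * ‖y‖ * ‖x - y‖) * (‖y‖ * ‖y‖) := by
          refine mul_le_mul ((hf₂ _ _ (by positivity) (pow_le_pow_left₀ hy.le hyx 2)).trans ?_)
            (mul_le_mul (PiLp.norm_apply_le y j) (PiLp.norm_apply_le y m) (norm_nonneg _) hy.le)
            (by positivity) (by positivity)
          gcongr
          nlinarith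
      _ = 3 * C₂ * ((‖y‖ ^ 2) ^ (β - 2) * ‖y‖ ^ 3) * ‖x - y‖ := by ring
      _ = 3 * C₂ * ‖y‖ ^ (2 * β - 1) * ‖x - y‖ := by
          rw [sq_rpow_mul_pow hy 3 (δ := 2 * β - 1) (by push_cast; ring)]
  calc ‖componentMap f j m x - componentMap f j m y‖
      = ‖(f (‖x‖ ^ 2) : 𝕜) * (x j * x m - y j * y m) +
          ((f (‖x‖ ^ 2) - f (‖y‖ ^ 2) : ℝ) : 𝕜) * (y j * y m)‖ := by
        rw [componentMap, componentMap]
        push_cast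
        ring_nf
    _ ≤ _ := (norm_add_le _ _).trans (add_le_add hmain hweight)
    _ = (2 * C₁ + 3 * C₂) * ‖y‖ ^ (2 * β - 1) * ‖x - y‖ := by ring

theorem norm_componentMap_sub_le_rpow (hβ₀ : 0 ≤ β) (hβ : 2 * β ≤ 1) (hC₁ : 0 ≤ C₁)
    (hC₂ : 0 ≤ C₂) (hf₁ : ∀ ρ, 0 < ρ → |f ρ| ≤ C₁ * ρ ^ (β - 1))
    (hf₂ : ∀ σ ρ, 0 < σ → σ ≤ ρ → |f ρ - f σ| ≤ C₂ * σ ^ (β - 2) * (ρ - σ))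
    (j m : ι) (x y : EuclideanSpace 𝕜 ι) :
    ‖componentMap f j m x - componentMap f j m y‖ ≤
      3 * (2 * C₁ + 3 * C₂) * ‖x - y‖ ^ (2 * β) :=
  norm_sub_le_mul_rpow_of_norm_le_of_norm_sub_le (by positivity) hβ (by positivity)
    (fun x ↦ (norm_componentMap_le hC₁ hf₁ j m x).trans (by gcongr; linarith))
    (fun _ _ hy hyx hx ↦ norm_componentMap_sub_le hβ hC₁ hC₂ hf₁ hf₂ j m hy hyx hx) x y

end componentMap

noncomputable def transP' (n : ℕ) (R ρ : ℝ) : ℝ :=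
  ((n + 1) * R ^ ((1 : ℝ) / n - 4) / n ^ 2) * ρ ^ 3
    - ((4 * n + 5) * R ^ ((1 : ℝ) / n - 3) / n ^ 2) * ρ ^ 2
    + (4 * (n + 2) * R ^ ((1 : ℝ) / n - 2) / n ^ 2) * ρ
    - 4 * R ^ ((1 : ℝ) / n - 1) / n ^ 2

noncomputable def transP'' (n : ℕ) (R ρ : ℝ) : ℝ :=
  (3 * (n + 1) * R ^ ((1 : ℝ) / n - 4) / n ^ 2) * ρ ^ 2
    - (2 * (4 * n + 5) * R ^ ((1 : ℝ) / n - 3) / n ^ 2) * ρ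
    + 4 * (n + 2) * R ^ ((1 : ℝ) / n - 2) / n ^ 2

lemma hasDerivAt_transP (n : ℕ) (R ρ : ℝ) : HasDerivAt (transP n R) (transP' n R ρ) ρ := by
  have := (((((hasDerivAt_pow 4 ρ).const_mul ((n + 1) * R ^ ((1 : ℝ) / n - 4) / (4 * n ^ 2))).sub
    ((hasDerivAt_pow 3 ρ).const_mul ((4 * n + 5) * R ^ ((1 : ℝ) / n - 3) / (3 * n ^ 2)))).add
    ((hasDerivAt_pow 2 ρ).const_mul (2 * (n + 2) * R ^ ((1 : ℝ) / n - 2) / n ^ 2))).sub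
    ((hasDerivAt_id ρ).const_mul (4 * R ^ ((1 : ℝ) / n - 1) / n ^ 2))).add_const
    ((12 * n ^ 2 - 11 * n + 17) * R ^ ((1 : ℝ) / n) / (12 * n ^ 2))
  refine this.congr_deriv ?_
  simp only [transP']
  ring

lemma hasDerivAt_transP' (n : ℕ) (R ρ : ℝ) : HasDerivAt (transP' n R) (transP'' n R ρ) ρ := by
  have := ((((hasDerivAt_pow 3 ρ).const_mul ((n + 1) * R ^ ((1 : ℝ) / n - 4) / n ^ 2)).sub
    ((hasDerivAt_pow 2 ρ).const_mul ((4 * n + 5) * R ^ ((1 : ℝ) / n - 3) / n ^ 2))).add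
    ((hasDerivAt_id ρ).const_mul (4 * (n + 2) * R ^ ((1 : ℝ) / n - 2) / n ^ 2))).sub_const
    (4 * R ^ ((1 : ℝ) / n - 1) / n ^ 2)
  refine this.congr_deriv ?_
  simp only [transP'']
  ring

section transition

variable {n : ℕ} {R : ℝ}

lemma transP'_self (hn : n ≠ 0) (hR : 0 < R) :
    transP' n R R = 1 / n * R ^ ((1 : ℝ) / n - 1) := by
  simp only [transP', Real.rpow_sub hR, Real.rpow_one, Real.rpow_ofNat]
  field_simp
  ring

lemma transP'_two_mul (hn : n ≠ 0) (hR : 0 < R) : transP' n R (2 * R) = 0 := by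
  simp only [transP', Real.rpow_sub hR, Real.rpow_one, Real.rpow_ofNat]
  field_simp
  ring

lemma transP''_self (hn : n ≠ 0) (hR : 0 < R) :
    transP'' n R R = 1 / n * (1 / n - 1) * R ^ ((1 : ℝ) / n - 1 - 1) := by
  simp only [transP'', Real.rpow_sub hR, Real.rpow_one, Real.rpow_ofNat]
  field_simp
  ring

lemma transP''_two_mul (hn : n ≠ 0) (hR : 0 < R) : transP'' n R (2 * R) = 0 := by
  simp only [transP'', Real.rpow_sub hR, Real.rpow_ofNat]
  field_simp
  ring

lemma A2factor_eq_powerCutoff :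
    A2factor n R = powerCutoff (1 / n) (1 / n - 1) R (transP' n R) := by
  ext ρ
  simp only [A2factor, powerCutoff, (hasDerivAt_transP n R ρ).deriv]

lemma hasDerivAt_A2factor (hn : n ≠ 0) (hR : 0 < R) {ρ : ℝ} (hρ : 0 < ρ) :
    HasDerivAt (A2factor n R)
      (powerCutoff (1 / n * (1 / n - 1)) (1 / n - 1 - 1) R (transP'' n R) ρ) ρ := by
  rw [A2factor_eq_powerCutoff]
  exact hasDerivAt_powerCutoff hR (hasDerivAt_transP' n R) (transP'_self hn hR)
    (transP''_self hn hR) (transP'_two_mul hn hR) (transP''_two_mul hn hR) hρ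

lemma one_div_natCast_le_one (hn : n ≠ 0) : (1 : ℝ) / n ≤ 1 := by
  rw [one_div]
  exact inv_le_one_of_one_le₀ (Nat.one_le_cast.2 (Nat.one_le_iff_ne_zero.2 hn))

lemma exists_abs_A2factor_le (hn : n ≠ 0) (hR : 0 < R) :
    ∃ C, 0 ≤ C ∧ ∀ ρ, 0 < ρ → |A2factor n R ρ| ≤ C * ρ ^ ((1 : ℝ) / n - 1) := by
  rw [A2factor_eq_powerCutoff]
  exact exists_abs_powerCutoff_le (by linarith [one_div_natCast_le_one hn]) hR
    (by unfold transP'; fun_prop)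

lemma exists_abs_A2factor_sub_le (hn : n ≠ 0) (hR : 0 < R) :
    ∃ C, 0 ≤ C ∧ ∀ σ ρ, 0 < σ → σ ≤ ρ →
      |A2factor n R ρ - A2factor n R σ| ≤ C * σ ^ ((1 : ℝ) / n - 2) * (ρ - σ) := by
  have hγ : (1 : ℝ) / n - 1 - 1 ≤ 0 := by linarith [one_div_natCast_le_one hn]
  obtain ⟨C, hC, hbound⟩ := exists_abs_powerCutoff_le (c := 1 / n * (1 / n - 1)) hγ hR
    (by unfold transP''; fun_prop : Continuous (transP'' n R)).continuousOn
  refine ⟨C, hC, fun σ ρ hσ hσρ ↦ ?_⟩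
  rw [show (1 : ℝ) / n - 2 = 1 / n - 1 - 1 by ring]
  exact abs_sub_le_mul_rpow_of_hasDerivAt hC hγ (fun x hx ↦ hasDerivAt_A2factor hn hR hx)
    hbound hσ hσρ

end transition

/-- Each component map `Ψ ↦ f(|Ψ|²) ψ_j ψ_m` is Hölder continuous on `ℂ^N`
with exponent `α = 2/n`. -/
theorem stmt6 (N n : ℕ) (hn : n = 2 ∨ n = 3) (R : ℝ) (hR : 0 < R) :
    ∃ c : ℝ, ∀ (Ψ Φ : EuclideanSpace ℂ (Fin N)) (j m : Fin N),
      ‖(A2factor n R (‖Ψ‖ ^ 2) : ℂ) * Ψ j * Ψ m -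
          (A2factor n R (‖Φ‖ ^ 2) : ℂ) * Φ j * Φ m‖ ≤
        c * ‖Ψ - Φ‖ ^ ((2 : ℝ) / n) := by
  have hn₀ : n ≠ 0 := by omega
  have hβ : 2 * ((1 : ℝ) / n) ≤ 1 := by rcases hn with rfl | rfl <;> norm_num
  obtain ⟨C₁, hC₁, hf₁⟩ := exists_abs_A2factor_le hn₀ hR
  obtain ⟨C₂, hC₂, hf₂⟩ := exists_abs_A2factor_sub_le hn₀ hR
  refine ⟨3 * (2 * C₁ + 3 * C₂), fun Ψ Φ j m ↦ ?_⟩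
  rw [show (2 : ℝ) / n = 2 * (1 / n) by ring]
  exact norm_componentMap_sub_le_rpow (by positivity) hβ hC₁ hC₂ hf₁ hf₂ j m Ψ Φ
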